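/- The Koornwinder–Dubiner polynomials g_{m,n}(x,y) = P_m^{(0,0)}(x/(1−y))·(1−y)^m·P_n^{(2m+1,0)}(y) are pairwise orthogonal on the triangle T' = {(x,y) : 0 ≤ x, 0 ≤ y, x + y ≤ 1} (after the appropriate linear change to the domain where x/(1−y), y range over the Jacobi intervals): ∫_{T'} g_{m,n} g_{m',n'} = 0 whenever (m,n) ≠ (m',n'). -/

import Mathlib

open MeasureTheory Polynomial

/-- The Jacobi polynomial `P_n^{(α,β)}` (with natural-number parameters),
defined by the explicit formula
`P_n^{(α,β)}(x) = ∑_{s=0}^n C(n+α, n-s) C(n+β, s) ((x-1)/2)^s ((x+1)/2)^{n-s}`. -/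
noncomputable def jacobiP (α β n : ℕ) : Polynomial ℝ :=
  ∑ s ∈ Finset.range (n + 1),
    ((Nat.choose (n + α) (n - s) : ℝ) * (Nat.choose (n + β) s : ℝ)) •
      ((Polynomial.C (2⁻¹ : ℝ) * (Polynomial.X - 1)) ^ s *
        (Polynomial.C (2⁻¹ : ℝ) * (Polynomial.X + 1)) ^ (n - s))

/-- The Koornwinder–Dubiner function on the unit right triangle (the Jacobi
arguments `x/(1-y)` and `y` are linearly rescaled from `[0,1]` to `[-1,1]`). -/
noncomputable def gKD (m n : ℕ) (p : ℝ × ℝ) : ℝ :=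
  (jacobiP 0 0 m).eval (2 * p.1 / (1 - p.2) - 1) * (1 - p.2) ^ m *
    (jacobiP (2 * m + 1) 0 n).eval (2 * p.2 - 1)

/-- The unit right triangle. -/
def unitTriangle : Set (ℝ × ℝ) :=
  {p : ℝ × ℝ | 0 ≤ p.1 ∧ 0 ≤ p.2 ∧ p.1 + p.2 ≤ 1}

/-!
Duffy's substitution `x = u (1 - y)` maps the unit square onto the triangle with Jacobian
`1 - y` and turns `g_{m,n} g_{m',n'}` into `a(u) (1 - y)^{m+m'} b(y)`, where
`a = P_m P_{m'}` (Legendre, at `2u - 1`) and `b = P_n^{(2m+1,0)} P_{n'}^{(2m'+1,0)}` (at `2y - 1`).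
So the integral is `(∫₀¹ a) · (∫₀¹ (1 - y)^{m+m'+1} b)`. If `m ≠ m'` the first factor vanishes by
Legendre orthogonality; if `m = m'` then `n ≠ n'` and the weight is exactly `(1 - y)^{2m+1}`, so
the second vanishes by Jacobi orthogonality. That in turn reduces to the vanishing of the moments
`∫₀¹ (1 - y)^α P_n^{(α,0)}(2y - 1) y^k` for `k < n`: expanding `P_n^{(α,0)}` and evaluating the
Beta integrals turns a moment into an `n`-th finite difference of a polynomial of degree `k`.
-/

open Finset Nat

theorem sum_range_neg_one_pow_mul_choose_mul_eval_eq_zero {R : Type*} [CommRing R]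
    {P : R[X]} {n : ℕ} (hP : P.natDegree < n) :
    ∑ j ∈ range (n + 1), (-1 : R) ^ (n - j) * n.choose j * P.eval (j : R) = 0 := by
  have h := congrFun (Polynomial.fwdDiff_iter_eq_zero_of_degree_lt hP) 0
  rw [fwdDiff_iter_eq_sum_shift] at h
  simpa [zsmul_eq_mul, nsmul_eq_mul] using h

theorem integral_pow_mul_one_sub_pow (a b : ℕ) :
    ∫ x in (0 : ℝ)..1, x ^ a * (1 - x) ^ b = a ! * b ! / (a + b + 1)! := by
  have hB : Complex.betaIntegral (a + 1) (b + 1) =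
      ↑(∫ x in (0 : ℝ)..1, x ^ a * (1 - x) ^ b) := by
    rw [Complex.betaIntegral, ← intervalIntegral.integral_ofReal]
    refine intervalIntegral.integral_congr fun x _ => ?_
    simp [← Complex.cpow_natCast]
  have hΓ := Complex.Gamma_mul_Gamma_eq_betaIntegral (s := a + 1) (t := b + 1)
    (by simp; positivity) (by simp; positivity)
  rw [show (a + 1 + (b + 1) : ℂ) = ↑(a + b + 1) + 1 by push_cast; ring, hB] at hΓ
  simp only [Complex.Gamma_nat_eq_factorial] at hΓ
  rw [eq_div_iff (by exact_mod_cast factorial_ne_zero _)]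
  exact_mod_cast (hΓ.trans (mul_comm _ _)).symm

theorem natDegree_jacobiP_le (α β n : ℕ) : (jacobiP α β n).natDegree ≤ n := by
  refine natDegree_sum_le_of_forall_le _ _ fun s hs => (natDegree_smul_le _ _).trans ?_
  have := mem_range.mp hs
  compute_degree
  omega

theorem jacobiP_eval_two_mul_sub_one (α n : ℕ) (y : ℝ) :
    (jacobiP α 0 n).eval (2 * y - 1) =
      ∑ j ∈ range (n + 1),
        ((n + α).choose j * n.choose j : ℝ) * ((y - 1) ^ (n - j) * y ^ j) := by
  rw [← sum_range_reflect]
  simp only [jacobiP, eval_finsetSum, eval_smul, smul_eq_mul, eval_mul, eval_pow, eval_C,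
    eval_sub, eval_add, eval_X, eval_one, add_zero]
  refine sum_congr rfl fun j hj => ?_
  have := mem_range.mp hj
  rw [show n + 1 - 1 - j = n - j by omega, show n - (n - j) = j by omega, choose_symm (by omega)]
  ring

theorem Nat.choose_mul_factorial_sub_mul_factorial_add (N j k : ℕ) (hj : j ≤ N) :
    N.choose j * (N - j)! * (j + k)! = N ! * (j + 1).ascFactorial k := by
  rw [← factorial_mul_ascFactorial, ← choose_mul_factorial_mul_factorial hj]
  ring

theorem integral_one_sub_pow_mul_jacobiP_mul_pow {α k n : ℕ} (hk : k < n) :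
    ∫ y in (0 : ℝ)..1, (1 - y) ^ α * (jacobiP α 0 n).eval (2 * y - 1) * y ^ k = 0 := by
  set Q : ℝ[X] := (ascPochhammer ℝ k).comp (X + C 1)
  have hQ : Q.natDegree < n := by
    rwa [natDegree_comp, ascPochhammer_natDegree, natDegree_X_add_C, mul_one]
  have hterm : ∀ j ∈ range (n + 1),
      ∫ y in (0 : ℝ)..1, ((n + α).choose j * n.choose j : ℝ) * (-1) ^ (n - j) *
          (y ^ (j + k) * (1 - y) ^ (n + α - j)) =
        (n + α)! / (n + α + k + 1)! * ((-1) ^ (n - j) * n.choose j * Q.eval (j : ℝ)) := by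
    intro j hj
    have hjn := mem_range.mp hj
    have hfac := Nat.choose_mul_factorial_sub_mul_factorial_add (n + α) j k (by omega)
    have hQj : Q.eval (j : ℝ) = ((j + 1).ascFactorial k : ℝ) := by
      simp [Q, ← ascPochhammer_nat_eq_ascFactorial]
    rw [intervalIntegral.integral_const_mul, integral_pow_mul_one_sub_pow,
      show j + k + (n + α - j) + 1 = n + α + k + 1 by omega, hQj]
    have hfacℝ : ((n + α).choose j * (n + α - j)! * (j + k)! : ℝ) =
        (n + α)! * (j + 1).ascFactorial k := by
      exact_mod_cast hfac
    field_simp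
    linear_combination (n.choose j : ℝ) * hfacℝ
  calc ∫ y in (0 : ℝ)..1, (1 - y) ^ α * (jacobiP α 0 n).eval (2 * y - 1) * y ^ k
      = ∑ j ∈ range (n + 1), ∫ y in (0 : ℝ)..1, ((n + α).choose j * n.choose j : ℝ) *
          (-1) ^ (n - j) * (y ^ (j + k) * (1 - y) ^ (n + α - j)) := by
        rw [← intervalIntegral.integral_finsetSum fun j _ =>
          (Continuous.intervalIntegrable (by fun_prop) _ _)]
        refine intervalIntegral.integral_congr fun y _ => ?_
        simp only [jacobiP_eval_two_mul_sub_one, mul_sum, sum_mul]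
        refine sum_congr rfl fun j hj => ?_
        rw [show n + α - j = α + (n - j) by have := mem_range.mp hj; omega,
          ← neg_sub 1 y, neg_pow]
        ring
    _ = (n + α)! / (n + α + k + 1)! *
          ∑ j ∈ range (n + 1), (-1) ^ (n - j) * n.choose j * Q.eval (j : ℝ) := by
        rw [sum_congr rfl hterm, mul_sum]
    _ = 0 := by rw [sum_range_neg_one_pow_mul_choose_mul_eval_eq_zero hQ, mul_zero]

theorem integral_one_sub_pow_mul_jacobiP_mul_eval {α n : ℕ} {q : ℝ[X]}
    (hq : q.natDegree < n) :
    ∫ y in (0 : ℝ)..1, (1 - y) ^ α * (jacobiP α 0 n).eval (2 * y - 1) * q.eval y = 0 := by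
  simp_rw [eval_eq_sum_range (p := q), mul_sum]
  rw [intervalIntegral.integral_finsetSum fun k _ =>
    (Continuous.intervalIntegrable (by fun_prop) _ _)]
  refine sum_eq_zero fun k hk => ?_
  simp_rw [mul_left_comm _ (q.coeff k)]
  rw [intervalIntegral.integral_const_mul,
    integral_one_sub_pow_mul_jacobiP_mul_pow (by have := mem_range.mp hk; omega), mul_zero]

theorem integral_one_sub_pow_mul_jacobiP_mul_jacobiP {α n n' : ℕ} (h : n ≠ n') :
    ∫ y in (0 : ℝ)..1,
      (1 - y) ^ α * ((jacobiP α 0 n).eval (2 * y - 1) * (jacobiP α 0 n').eval (2 * y - 1)) =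
        0 := by
  wlog hlt : n' < n generalizing n n'
  · simp_rw [mul_comm ((jacobiP α 0 n).eval _)]
    exact this h.symm (by omega)
  have hq : ((jacobiP α 0 n').comp (C 2 * X - C 1)).natDegree < n := by
    rw [natDegree_comp]
    have : (C (2 : ℝ) * X - C 1).natDegree ≤ 1 := by compute_degree
    nlinarith [natDegree_jacobiP_le α 0 n']
  simpa [mul_assoc] using integral_one_sub_pow_mul_jacobiP_mul_eval (α := α) hq

theorem isClosed_unitTriangle : IsClosed unitTriangle :=
  (isClosed_le continuous_const continuous_fst).inter <|
    (isClosed_le continuous_const continuous_snd).inter <|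
      isClosed_le (continuous_fst.add continuous_snd) continuous_const

theorem volume_unitTriangle_lt_top : volume unitTriangle < ⊤ := by
  have hsub : unitTriangle ⊆ Set.Icc (0 : ℝ × ℝ) 1 := fun p ⟨hx, hy, hxy⟩ =>
    ⟨⟨hx, hy⟩, by simp only [Prod.fst_one]; linarith, by simp only [Prod.snd_one]; linarith⟩
  exact (measure_mono hsub).trans_lt isCompact_Icc.measure_lt_top

-- At the apex `(0, 1)` the quotient is `0 / 0 = 0`.
theorem div_one_sub_mem_Icc_of_mem_unitTriangle {p : ℝ × ℝ} (hp : p ∈ unitTriangle) :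
    p.1 / (1 - p.2) ∈ Set.Icc (0 : ℝ) 1 := by
  obtain ⟨hx, -, hxy⟩ := hp
  exact ⟨div_nonneg hx (by linarith), div_le_one_of_le₀ (by linarith) (by linarith)⟩

theorem setIntegral_unitTriangle {F : ℝ × ℝ → ℝ} (hF : IntegrableOn F unitTriangle) :
    ∫ p in unitTriangle, F p = ∫ y in (0 : ℝ)..1, ∫ x in (0 : ℝ)..(1 - y), F (x, y) := by
  have hT := isClosed_unitTriangle.measurableSet
  rw [← integral_indicator hT, Measure.volume_eq_prod,
    integral_prod_symm _ (by rwa [← Measure.volume_eq_prod, integrable_indicator_iff hT]),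
    intervalIntegral.integral_of_le zero_le_one, ← integral_Icc_eq_integral_Ioc,
    ← integral_indicator measurableSet_Icc]
  congr 1 with y
  by_cases hy : y ∈ Set.Icc (0 : ℝ) 1
  · rw [Set.indicator_of_mem hy, intervalIntegral.integral_of_le (by linarith [hy.2]),
      ← integral_Icc_eq_integral_Ioc, ← integral_indicator measurableSet_Icc]
    congr 1 with x
    simp only [Set.indicator_apply, unitTriangle, Set.mem_ofPred_eq, Set.mem_Icc]
    congr 1
    exact propext ⟨fun ⟨h1, _, h3⟩ => ⟨h1, by linarith⟩,
      fun ⟨h1, h2⟩ => ⟨h1, hy.1, by linarith⟩⟩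
  · rw [Set.indicator_of_notMem hy]
    refine integral_eq_zero_of_ae (Filter.Eventually.of_forall fun x => ?_)
    refine Set.indicator_of_notMem (fun (h : (x, y) ∈ unitTriangle) => hy ?_) _
    obtain ⟨hx, hy0, hxy⟩ := h
    exact ⟨hy0, by linarith⟩

theorem integrableOn_unitTriangle_comp_div_one_sub_mul {f g : ℝ → ℝ} (hf : Continuous f)
    (hg : Continuous g) :
    IntegrableOn (fun p : ℝ × ℝ => f (p.1 / (1 - p.2)) * g p.2) unitTriangle := by
  have hI : IsCompact (Set.Icc (0 : ℝ) 1) := isCompact_Icc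
  obtain ⟨Cf, hCf⟩ := hI.exists_bound_of_continuousOn hf.continuousOn
  obtain ⟨Cg, hCg⟩ := hI.exists_bound_of_continuousOn hg.continuousOn
  have hmeas : Measurable fun p : ℝ × ℝ => f (p.1 / (1 - p.2)) * g p.2 :=
    (hf.measurable.comp (by fun_prop)).mul (hg.measurable.comp measurable_snd)
  refine .of_bound volume_unitTriangle_lt_top hmeas.aestronglyMeasurable (Cf * Cg) <|
    ae_restrict_of_forall_mem isClosed_unitTriangle.measurableSet fun p hp => ?_
  have hu := hCf _ (div_one_sub_mem_Icc_of_mem_unitTriangle hp)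
  obtain ⟨hx, hy, hxy⟩ := hp
  rw [norm_mul]
  exact mul_le_mul hu (hCg _ ⟨hy, by linarith⟩) (norm_nonneg _) ((norm_nonneg _).trans hu)

theorem setIntegral_unitTriangle_comp_div_one_sub_mul {f g : ℝ → ℝ} (hf : Continuous f)
    (hg : Continuous g) :
    ∫ p in unitTriangle, f (p.1 / (1 - p.2)) * g p.2 =
      (∫ u in (0 : ℝ)..1, f u) * ∫ y in (0 : ℝ)..1, (1 - y) * g y := by
  rw [setIntegral_unitTriangle (integrableOn_unitTriangle_comp_div_one_sub_mul hf hg),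
    ← intervalIntegral.integral_const_mul]
  refine intervalIntegral.integral_congr fun y _ => ?_
  rcases eq_or_ne y 1 with rfl | hy
  · simp
  · dsimp only
    have hy' : 1 - y ≠ 0 := sub_ne_zero.2 hy.symm
    rw [intervalIntegral.integral_mul_const, intervalIntegral.integral_comp_div _ hy', zero_div,
      div_self hy', smul_eq_mul]
    ring

/-- The Koornwinder–Dubiner polynomials are pairwise orthogonal in
`L²` of the unit right triangle. -/
theorem koornwinderDubiner_orthogonal (m n m' n' : ℕ)
    (hne : (m, n) ≠ (m', n')) :
    ∫ p in unitTriangle, gKD m n p * gKD m' n' p = 0 := by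
  set A : ℝ → ℝ := fun u =>
    (jacobiP 0 0 m).eval (2 * u - 1) * (jacobiP 0 0 m').eval (2 * u - 1)
  set B : ℝ → ℝ := fun y => (1 - y) ^ (m + m') *
    ((jacobiP (2 * m + 1) 0 n).eval (2 * y - 1) * (jacobiP (2 * m' + 1) 0 n').eval (2 * y - 1))
  have hsplit (p : ℝ × ℝ) : gKD m n p * gKD m' n' p = A (p.1 / (1 - p.2)) * B p.2 := by
    simp only [A, B, gKD, mul_div_assoc]
    ring
  simp_rw [hsplit]
  rw [setIntegral_unitTriangle_comp_div_one_sub_mul (by fun_prop) (by fun_prop)]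
  rcases eq_or_ne m m' with rfl | hm
  · have hn : n ≠ n' := fun h => hne (h ▸ rfl)
    refine mul_eq_zero_of_right _ ?_
    refine (intervalIntegral.integral_congr fun y _ => ?_).trans
      (integral_one_sub_pow_mul_jacobiP_mul_jacobiP (α := 2 * m + 1) hn)
    simp only [B]
    ring
  · refine mul_eq_zero_of_left ?_ _
    simpa using integral_one_sub_pow_mul_jacobiP_mul_jacobiP (α := 0) hm
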